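/- Let G be a finite group and let R, S be nonempty disjoint subsets of G such that r ▷ r' ∈ R for all r, r' ∈ R; s ▷ s' ∈ S for all s, s' ∈ S; and r ▷ s ∈ S, s ▷ r ∈ R for all r ∈ R, s ∈ S. Let H be the subgroup of G generated by X = R ∪ S. Then no element of R is conjugate in H to an element of S: for all σ₁ ∈ R and σ₂ ∈ S there is no t ∈ H with σ₂ = t σ₁ t⁻¹. -/

import Mathlib

/-- The action of a permutation `σ ∈ S_n` on a vector `a ∈ (ℤ/2)^n`:
`(σ · a)_i = a_{σ⁻¹ i}`. -/
def permAct {n : ℕ} (σ : Equiv.Perm (Fin n)) (a : Fin n → ZMod 2) : Fin n → ZMod 2 :=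
  fun i => a (σ⁻¹ i)

/-- The underlying set of the hyperoctahedral group `W n = (ℤ/2)^n ⋊ S_n`. -/
@[ext]
structure W (n : ℕ) where
  vec : Fin n → ZMod 2
  perm : Equiv.Perm (Fin n)

/-- Group structure of `W n`: `(a,σ)(b,μ) = (a + σ·b, σμ)`. -/
instance (n : ℕ) : Group (W n) where
  mul x y := ⟨x.vec + permAct x.perm y.vec, x.perm * y.perm⟩
  one := ⟨0, 1⟩
  inv x := ⟨permAct x.perm⁻¹ (-x.vec), x.perm⁻¹⟩
  mul_assoc x y z := by
    refine W.ext ?_ ?_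
    · show (x.vec + permAct x.perm y.vec) + permAct (x.perm * y.perm) z.vec
        = x.vec + permAct x.perm (y.vec + permAct y.perm z.vec)
      funext i
      simp [permAct, mul_inv_rev, Equiv.Perm.mul_apply, add_assoc]
    · exact mul_assoc _ _ _
  one_mul x := by
    refine W.ext ?_ ?_
    · show (0 : Fin n → ZMod 2) + permAct 1 x.vec = x.vec
      funext i; simp [permAct]
    · exact one_mul _
  mul_one x := by
    refine W.ext ?_ ?_
    · show x.vec + permAct x.perm 0 = x.vec
      funext i; simp [permAct]
    · exact mul_one _
  inv_mul_cancel x := by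
    refine W.ext ?_ ?_
    · show permAct x.perm⁻¹ (-x.vec) + permAct x.perm⁻¹ x.vec = 0
      funext i; simp only [permAct, Pi.add_apply, Pi.neg_apply, neg_add_cancel, Pi.zero_apply]
    · exact inv_mul_cancel _

@[simp] theorem W.mul_vec {n : ℕ} (x y : W n) :
    (x * y).vec = x.vec + permAct x.perm y.vec := rfl
@[simp] theorem W.mul_perm {n : ℕ} (x y : W n) :
    (x * y).perm = x.perm * y.perm := rfl
@[simp] theorem W.one_vec {n : ℕ} : (1 : W n).vec = 0 := rfl
@[simp] theorem W.one_perm {n : ℕ} : (1 : W n).perm = 1 := rfl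
@[simp] theorem W.inv_vec {n : ℕ} (x : W n) :
    (x⁻¹).vec = permAct x.perm⁻¹ (-x.vec) := rfl
@[simp] theorem W.inv_perm {n : ℕ} (x : W n) : (x⁻¹).perm = x.perm⁻¹ := rfl

/-- Conjugation `x ▷ y = x y x⁻¹` in a group. -/
def conjAct' {G : Type*} [Group G] (x y : G) : G := x * y * x⁻¹

/-- `sq(x,y) = x ▷ (y ▷ (x ▷ y))`. -/
def sqD {G : Type*} [Group G] (x y : G) : G := conjAct' x (conjAct' y (conjAct' x y))

/-- Conjugacy class of `x` in the group `G`. -/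
def conjClass {G : Type*} [Group G] (x : G) : Set G := {y | ∃ t : G, y = t * x * t⁻¹}

/-- A subset `O` of a group is of type D. -/
def IsTypeD {G : Type*} [Group G] (O : Set G) : Prop :=
  ∃ R S : Set G, R ⊆ O ∧ S ⊆ O ∧ R.Nonempty ∧ S.Nonempty ∧ Disjoint R S ∧
    (∀ r ∈ R, ∀ r' ∈ R, conjAct' r r' ∈ R) ∧
    (∀ s ∈ S, ∀ s' ∈ S, conjAct' s s' ∈ S) ∧
    (∀ r ∈ R, ∀ s ∈ S, conjAct' r s ∈ S ∧ conjAct' s r ∈ R) ∧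
    (∃ a ∈ R, ∃ b ∈ S, sqD a b ≠ b)

/-- The subgroup `K_n ⋊ S_n` of `W n`, where `K_n = {a : a_1 + ⋯ + a_n = 0}`. -/
def Ksub (n : ℕ) : Subgroup (W n) where
  carrier := {x | ∑ i, x.vec i = 0}
  one_mem' := by simp
  mul_mem' := by
    intro x y hx hy
    simp only [Set.mem_setOf_eq] at *
    rw [W.mul_vec]
    simp only [Pi.add_apply, Finset.sum_add_distrib, hx, zero_add, permAct]
    rw [Equiv.sum_comp x.perm⁻¹ y.vec]
    exact hy
  inv_mem' := by
    intro x hx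
    simp only [Set.mem_setOf_eq] at *
    rw [W.inv_vec]
    simp only [permAct, inv_inv, Pi.neg_apply]
    rw [Finset.sum_neg_distrib, Equiv.sum_comp x.perm x.vec, hx, neg_zero]

/- In a finite group the subgroup generated by `R ∪ S` is already the submonoid it generates,
so it suffices that each generator conjugates `R` into `R`; for `r ∈ R` and `s ∈ S` this is
`r ▷ r' ∈ R` and `s ▷ r' ∈ R`. Then `t σ₁ t⁻¹ ∈ R`, which is disjoint from `S`. -/

section

variable {G : Type*} [Group G]

theorem conjAct'_mul (x y a : G) : conjAct' (x * y) a = conjAct' x (conjAct' y a) := by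
  simp only [conjAct', mul_inv_rev, mul_assoc]

def conjInvariantSubmonoid (A : Set G) : Submonoid G where
  carrier := {t | ∀ a ∈ A, conjAct' t a ∈ A}
  one_mem' a ha := by simpa [conjAct'] using ha
  mul_mem' hx hy a ha := by
    rw [conjAct'_mul]
    exact hx _ (hy a ha)

theorem Subgroup.closure_subset_of_finite [Finite G] {X : Set G} {M : Submonoid G}
    (h : X ⊆ M) : (Subgroup.closure X : Set G) ⊆ M := by
  rw [← Subgroup.coe_toSubmonoid, Subgroup.closure_toSubmonoid_of_finite]
  exact Submonoid.closure_le.mpr h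

end

theorem not_conj_in_closure_general (G : Type*) [Group G] [Finite G] (R S : Set G)
    (hdisj : Disjoint R S)
    (hRR : ∀ r ∈ R, ∀ r' ∈ R, conjAct' r r' ∈ R)
    (hRS : ∀ r ∈ R, ∀ s ∈ S, conjAct' r s ∈ S ∧ conjAct' s r ∈ R) :
    ∀ σ₁ ∈ R, ∀ σ₂ ∈ S,
      ¬ ∃ t ∈ Subgroup.closure (R ∪ S), σ₂ = t * σ₁ * t⁻¹ := by
  have generators_preserve_R : R ∪ S ⊆ conjInvariantSubmonoid R := by
    rintro x (hx | hx) r hr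
    · exact hRR x hx r hr
    · exact (hRS r hr x hx).2
  rintro σ₁ h₁ σ₂ h₂ ⟨t, ht, rfl⟩
  exact hdisj.notMem_of_mem_left
    (Subgroup.closure_subset_of_finite generators_preserve_R ht σ₁ h₁) h₂

/-- given a type-D-style decomposition `R ∪ S` in a finite group
`G`, no element of `R` is conjugate to an element of `S` within the subgroup
generated by `R ∪ S`. -/
theorem not_conj_in_closure (G : Type*) [Group G] [Finite G] (R S : Set G)
    (hR : R.Nonempty) (hS : S.Nonempty) (hdisj : Disjoint R S)
    (hRR : ∀ r ∈ R, ∀ r' ∈ R, conjAct' r r' ∈ R)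
    (hSS : ∀ s ∈ S, ∀ s' ∈ S, conjAct' s s' ∈ S)
    (hRS : ∀ r ∈ R, ∀ s ∈ S, conjAct' r s ∈ S ∧ conjAct' s r ∈ R) :
    ∀ σ₁ ∈ R, ∀ σ₂ ∈ S,
      ¬ ∃ t ∈ Subgroup.closure (R ∪ S), σ₂ = t * σ₁ * t⁻¹ :=
  not_conj_in_closure_general G R S hdisj hRR hRS
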